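/- If C is a stable hyperplane code (C = code(H,X) for a stable arrangement), then for every maximal face σ of the combinatorial chamber complex cham(C) there is a unique face T ∈ Γ(C) with supp(T) = [n]\σ and link_T Γ(C) = Γ(2^σ). -/

import Mathlib

open scoped RealInnerProductSpace

def atom {n d : ℕ} (w : Fin n → EuclideanSpace ℝ (Fin d)) (h : Fin n → ℝ)
    (X : Set (EuclideanSpace ℝ (Fin d))) (σ : Finset (Fin n)) :
    Set (EuclideanSpace ℝ (Fin d)) :=
  {x ∈ X | ∀ i, i ∈ σ ↔ h i < ⟪w i, x⟫}

def StableArr {n d : ℕ} (w : Fin n → EuclideanSpace ℝ (Fin d)) (h : Fin n → ℝ)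
    (X : Set (EuclideanSpace ℝ (Fin d))) : Prop :=
  IsOpen X ∧ Convex ℝ X ∧ (∀ i, w i ≠ 0) ∧
    ∀ σ : Finset (Fin n),
      (X ∩ ⋂ i ∈ σ, {x | ⟪w i, x⟫ = h i}).Nonempty →
        LinearIndependent ℝ (fun i : σ => w i.1)

def hcode {n d : ℕ} (w : Fin n → EuclideanSpace ℝ (Fin d)) (h : Fin n → ℝ)
    (X : Set (EuclideanSpace ℝ (Fin d))) : Set (Finset (Fin n)) :=
  {σ | (atom w h X σ).Nonempty}

def polarFace {n : ℕ} (σ : Finset (Fin n)) : Finset (Fin n ⊕ Fin n) :=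
  σ.image Sum.inl ∪ σᶜ.image Sum.inr

def polar {n : ℕ} (C : Set (Finset (Fin n))) : Set (Finset (Fin n ⊕ Fin n)) :=
  {F | ∃ σ ∈ C, F ⊆ polarFace σ}

def polarOn {n : ℕ} (V : Finset (Fin n)) (C : Set (Finset (Fin n))) :
    Set (Finset (Fin n ⊕ Fin n)) :=
  {F | ∃ σ ∈ C, F ⊆ σ.image Sum.inl ∪ (V \ σ).image Sum.inr}

def link {V : Type*} [DecidableEq V] (Δ : Set (Finset V)) (T : Finset V) :
    Set (Finset V) :=
  {ν ∈ Δ | ν ∩ T = ∅ ∧ ν ∪ T ∈ Δ}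

def suppF {n : ℕ} (F : Finset (Fin n ⊕ Fin n)) : Finset (Fin n) :=
  F.image (Sum.elim id id)

def cham {n : ℕ} (C : Set (Finset (Fin n))) : Set (Finset (Fin n)) :=
  {σ | ∃ T ∈ polar C, suppF T = σᶜ ∧
    link (polar C) T = polarOn σ {τ | τ ⊆ σ}}

/-! A chamber of `σ` is determined by its positive part `S ⊆ σᶜ`, and `polarFaceOn σᶜ S` is a
chamber exactly when every `τ ∪ S` with `τ ⊆ σ` is a codeword. Points of these atoms realise every
sign pattern on the hyperplanes of `σ`, so by separation their convex hull contains a point of the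
atom `S` lying on all hyperplanes of `σ`. Two chambers `S ≠ S'` thus give two such points on
opposite sides of some hyperplane `j ∉ σ`; the segment joining them meets it in a point of `X` on
the hyperplanes of `σ ∪ {j}`. By stability, small perturbations of that point realise every sign
pattern on these hyperplanes, so `σ ∪ {j} ∈ cham C`, contradicting maximality of `σ`. -/

open Finset

section Polar

variable {n : ℕ}

def polarFaceOn (V σ : Finset (Fin n)) : Finset (Fin n ⊕ Fin n) :=
  σ.image Sum.inl ∪ (V \ σ).image Sum.inr

@[simp]
lemma inl_mem_polarFaceOn {V σ : Finset (Fin n)} {k : Fin n} :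
    Sum.inl k ∈ polarFaceOn V σ ↔ k ∈ σ := by
  simp [polarFaceOn]

@[simp]
lemma inr_mem_polarFaceOn {V σ : Finset (Fin n)} {k : Fin n} :
    Sum.inr k ∈ polarFaceOn V σ ↔ k ∈ V ∧ k ∉ σ := by
  simp [polarFaceOn]

@[simp]
lemma inl_mem_polarFace {σ : Finset (Fin n)} {k : Fin n} :
    Sum.inl k ∈ polarFace σ ↔ k ∈ σ := by
  simp [polarFace]

@[simp]
lemma inr_mem_polarFace {σ : Finset (Fin n)} {k : Fin n} :
    Sum.inr k ∈ polarFace σ ↔ k ∉ σ := by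
  simp [polarFace]

@[simp]
lemma mem_suppF {F : Finset (Fin n ⊕ Fin n)} {k : Fin n} :
    k ∈ suppF F ↔ Sum.inl k ∈ F ∨ Sum.inr k ∈ F := by
  simp [suppF]

lemma suppF_polarFaceOn {V σ : Finset (Fin n)} (hσ : σ ⊆ V) : suppF (polarFaceOn V σ) = V := by
  ext k
  by_cases k ∈ σ <;> simp_all [@hσ k]

lemma polarFace_subset_polarFace_iff {σ τ : Finset (Fin n)} :
    polarFace σ ⊆ polarFace τ ↔ σ = τ := by
  refine ⟨fun hστ => ?_, fun h => h ▸ subset_rfl⟩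
  ext k
  have hl := @hστ (Sum.inl k)
  have hr := @hστ (Sum.inr k)
  simp only [inl_mem_polarFace, inr_mem_polarFace] at hl hr
  tauto

lemma polarFaceOn_union_polarFaceOn_compl {σ τ S : Finset (Fin n)} (hτ : τ ⊆ σ) (hS : S ⊆ σᶜ) :
    polarFaceOn σ τ ∪ polarFaceOn σᶜ S = polarFace (τ ∪ S) := by
  ext (k | k)
  · simp
  · have := @hτ k
    have := @hS k
    simp only [mem_union, inr_mem_polarFaceOn, inr_mem_polarFace, mem_compl] at *
    tauto

lemma disjoint_polarFaceOn_compl {σ τ S : Finset (Fin n)} (hτ : τ ⊆ σ) (hS : S ⊆ σᶜ) :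
    Disjoint (polarFaceOn σ τ) (polarFaceOn σᶜ S) := by
  rw [disjoint_left]
  rintro (k | k) <;> have := @hτ k <;> have := @hS k <;> simp only [mem_compl] at * <;>
    simp <;> tauto

lemma suppF_injOn_polarFace (σ : Finset (Fin n)) :
    Set.InjOn (Sum.elim id id) (polarFace σ : Set (Fin n ⊕ Fin n)) := by
  rintro (k | k) hk (l | l) hl (rfl : k = l) <;> simp_all

lemma inr_notMem_of_mem_polar {C : Set (Finset (Fin n))} {F : Finset (Fin n ⊕ Fin n)}
    (hF : F ∈ polar C) {k : Fin n} (hk : Sum.inl k ∈ F) : Sum.inr k ∉ F := by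
  obtain ⟨c, -, hc⟩ := hF
  exact fun hk' => inr_mem_polarFace.1 (hc hk') (inl_mem_polarFace.1 (hc hk))

lemma subset_polarFaceOn_of_suppF_subset {C : Set (Finset (Fin n))} {F : Finset (Fin n ⊕ Fin n)}
    {V : Finset (Fin n)} (hF : F ∈ polar C) (hV : suppF F ⊆ V) :
    F ⊆ polarFaceOn V {k ∈ V | Sum.inl k ∈ F} := by
  rintro (k | k) hk
  · simpa [hk] using @hV k
  · simp only [inr_mem_polarFaceOn, mem_filter, not_and]
    exact ⟨hV (by simp [hk]), fun _ hl => inr_notMem_of_mem_polar hF hl hk⟩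

lemma eq_polarFaceOn_of_suppF_eq {C : Set (Finset (Fin n))} {F : Finset (Fin n ⊕ Fin n)}
    {V : Finset (Fin n)} (hF : F ∈ polar C) (hV : suppF F = V) :
    F = polarFaceOn V {k ∈ V | Sum.inl k ∈ F} := by
  refine (subset_polarFaceOn_of_suppF_subset hF hV.le).antisymm ?_
  rintro (k | k) hk
  · simp_all
  · simp only [inr_mem_polarFaceOn, mem_filter, not_and] at hk
    simpa [hk.2 hk.1] using hV.ge hk.1

lemma exists_eq_polarFaceOn_of_chamber {C : Set (Finset (Fin n))} {σ : Finset (Fin n)}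
    {T : Finset (Fin n ⊕ Fin n)} (hT : T ∈ polar C) (hsupp : suppF T = σᶜ)
    (hlink : link (polar C) T = polarOn σ {τ | τ ⊆ σ}) :
    ∃ S ⊆ σᶜ, T = polarFaceOn σᶜ S ∧ ∀ τ ⊆ σ, τ ∪ S ∈ C := by
  have hTS := eq_polarFaceOn_of_suppF_eq hT hsupp
  refine ⟨_, filter_subset _ _, hTS, fun τ hτ => ?_⟩
  have hν : polarFaceOn σ τ ∈ link (polar C) T := hlink ▸ ⟨τ, hτ, subset_rfl⟩
  obtain ⟨c, hc, hsub⟩ := hν.2.2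
  rw [hTS, polarFaceOn_union_polarFaceOn_compl hτ (filter_subset _ _),
    polarFace_subset_polarFace_iff] at hsub
  exact hsub ▸ hc

lemma link_polarFaceOn_compl {C : Set (Finset (Fin n))} {σ S : Finset (Fin n)} (hS : S ⊆ σᶜ)
    (hC : ∀ τ ⊆ σ, τ ∪ S ∈ C) :
    link (polar C) (polarFaceOn σᶜ S) = polarOn σ {τ | τ ⊆ σ} := by
  ext F
  constructor
  · rintro ⟨hF, hdisj, c, -, hc⟩
    have hsupp : suppF F ⊆ σ := by
      intro k hk
      by_contra hkσ
      obtain ⟨x, hxF, hx⟩ := mem_image.1 hk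
      obtain ⟨y, hyT, hy⟩ := mem_image.1 ((suppF_polarFaceOn hS).ge (mem_compl.2 hkσ))
      have hxy : x = y := suppF_injOn_polarFace c (hc (mem_union_left _ hxF))
        (hc (mem_union_right _ hyT)) (hx.trans hy.symm)
      exact eq_empty_iff_forall_notMem.1 hdisj x (mem_inter.2 ⟨hxF, hxy ▸ hyT⟩)
    exact ⟨_, filter_subset _ _, subset_polarFaceOn_of_suppF_subset hF hsupp⟩
  · rintro ⟨τ, hτ, hF⟩
    have hunion := polarFaceOn_union_polarFaceOn_compl hτ hS
    refine ⟨⟨τ ∪ S, hC τ hτ, hunion ▸ hF.trans subset_union_left⟩, ?_, τ ∪ S, hC τ hτ,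
      hunion ▸ union_subset_union hF subset_rfl⟩
    exact disjoint_iff_inter_eq_empty.1 ((disjoint_polarFaceOn_compl hτ hS).mono_left hF)

lemma mem_cham_of_forall_union_mem {C : Set (Finset (Fin n))} {σ S : Finset (Fin n)}
    (hS : S ⊆ σᶜ) (hC : ∀ τ ⊆ σ, τ ∪ S ∈ C) : σ ∈ cham C :=
  ⟨polarFaceOn σᶜ S,
    ⟨σ ∪ S, hC σ subset_rfl,
      subset_union_right.trans (polarFaceOn_union_polarFaceOn_compl subset_rfl hS).le⟩,
    suppF_polarFaceOn hS, link_polarFaceOn_compl hS hC⟩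

end Polar

open Filter Topology

theorem LinearIndependent.exists_inner_eq {ι E : Type*} [Fintype ι] [NormedAddCommGroup E]
    [InnerProductSpace ℝ E] {v : ι → E} (hv : LinearIndependent ℝ v) (r : ι → ℝ) :
    ∃ x : E, ∀ i, ⟪v i, x⟫ = r i := by
  set K := Submodule.span ℝ (Set.range v)
  have : FiniteDimensional ℝ K := FiniteDimensional.span_of_finite ℝ (Set.finite_range v)
  let f : K →L[ℝ] ℝ := LinearMap.toContinuousLinearMap ((Module.Basis.span hv).constr ℝ r)
  refine ⟨(InnerProductSpace.toDual ℝ K).symm f, fun i => ?_⟩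
  have hvi : ⟪v i, ((InnerProductSpace.toDual ℝ K).symm f : E)⟫ =
      ⟪Module.Basis.span hv i, (InnerProductSpace.toDual ℝ K).symm f⟫ := by
    rw [Submodule.coe_inner, Module.Basis.span_apply]
  rw [hvi, real_inner_comm, InnerProductSpace.toDual_symm_apply]
  exact (Module.Basis.span hv).constr_basis ℝ r i

theorem mem_convexHull_of_forall_orthant {ι : Type*} [Fintype ι] {Q : Set (ι → ℝ)} (b : ι → ℝ)
    (hQ : ∀ τ : Finset ι, ∃ q ∈ Q, ∀ i, (i ∈ τ → b i ≤ q i) ∧ (i ∉ τ → q i ≤ b i)) :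
    b ∈ convexHull ℝ Q := by
  classical
  choose q hqQ hq using hQ
  refine convexHull_mono (Set.range_subset_iff.2 hqQ) ?_
  by_contra hb
  obtain ⟨f, u, hfb, hfq⟩ := geometric_hahn_banach_point_closed (convex_convexHull ℝ _)
    ((Set.finite_range q).isCompact_convexHull ℝ).isClosed hb
  set τ : Finset ι := {i | f (fun j => if i = j then 1 else 0) < 0}
  -- `τ` collects the basis vectors on which `f` is negative, so each term of `f (q τ - b)` is `≤ 0`.
  have hle : f (q τ - b) ≤ 0 := by
    have hsum := LinearMap.pi_apply_eq_sum_univ (f : (ι → ℝ) →ₗ[ℝ] ℝ) (q τ - b)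
    simp only [ContinuousLinearMap.coe_coe] at hsum
    rw [hsum]
    refine Finset.sum_nonpos fun i _ => ?_
    rw [Pi.sub_apply, smul_eq_mul]
    by_cases hi : i ∈ τ
    · have hfi : f (fun j => if i = j then 1 else 0) < 0 := by simpa [τ] using hi
      exact mul_nonpos_of_nonneg_of_nonpos (sub_nonneg.2 ((hq τ i).1 hi)) hfi.le
    · have hfi : 0 ≤ f (fun j => if i = j then 1 else 0) := by simpa [τ] using hi
      exact mul_nonpos_of_nonpos_of_nonneg (sub_nonpos.2 ((hq τ i).2 hi)) hfi
  have hfq' := hfq _ (subset_convexHull ℝ _ (Set.mem_range_self τ))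
  rw [map_sub] at hle
  linarith

theorem ContinuousAt.eventually_lt_iff {α : Type*} [TopologicalSpace α] {g : α → ℝ} {x : α}
    (hg : ContinuousAt g x) {a : ℝ} (ha : g x ≠ a) : ∀ᶠ y in 𝓝 x, (a < g y ↔ a < g x) := by
  rcases ha.lt_or_gt with hlt | hlt
  · filter_upwards [hg.eventually_lt_const hlt] with y hy
    exact iff_of_false hy.not_gt hlt.not_gt
  · filter_upwards [hg.eventually_const_lt hlt] with y hy
    exact iff_of_true hy hlt

section Arrangement

variable {n d : ℕ} {w : Fin n → EuclideanSpace ℝ (Fin d)} {h : Fin n → ℝ}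
  {X : Set (EuclideanSpace ℝ (Fin d))}

/- Linear independence of the hyperplanes through `x` gives a direction crossing each of them to the
side `c` prescribes; a short step in it stays in `X` and on the same side of the other hyperplanes. -/
theorem StableArr.mem_hcode_of_compatible (hst : StableArr w h X)
    {x : EuclideanSpace ℝ (Fin d)} (hx : x ∈ X) {c : Finset (Fin n)}
    (hc : ∀ i, ⟪w i, x⟫ ≠ h i → (i ∈ c ↔ h i < ⟪w i, x⟫)) : c ∈ hcode w h X := by
  classical
  set F : Finset (Fin n) := {i | ⟪w i, x⟫ = h i}
  obtain ⟨v, hv⟩ := (hst.2.2.2 F ⟨x, hx, Set.mem_iInter₂.2 fun i hi => by simpa [F] using hi⟩)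
    |>.exists_inner_eq fun i => if i.1 ∈ c then 1 else -1
  have hnear : ∀ᶠ y in 𝓝 x, y ∈ X ∧ ∀ i ∈ Fᶜ, (h i < ⟪w i, y⟫ ↔ h i < ⟪w i, x⟫) := by
    refine (hst.1.eventually_mem hx).and ((Finset.eventually_all _).2 fun i hi => ?_)
    exact (continuous_const.inner continuous_id).continuousAt.eventually_lt_iff
      (by simpa [F] using hi)
  have hline : Tendsto (fun t : ℝ => x + t • v) (𝓝[>] 0) (𝓝 x) := by
    have : Continuous fun t : ℝ => x + t • v := by fun_prop
    simpa using (this.tendsto 0).mono_left nhdsWithin_le_nhds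
  obtain ⟨t, ⟨htX, htF⟩, ht : 0 < t⟩ := ((hline.eventually hnear).and self_mem_nhdsWithin).exists
  refine ⟨x + t • v, htX, fun i => ?_⟩
  by_cases hi : i ∈ F
  · have hxi : ⟪w i, x⟫ = h i := by simpa [F] using hi
    rw [inner_add_right, real_inner_smul_right, hv ⟨i, hi⟩, hxi]
    split_ifs with hic <;> simp only [hic, true_iff, false_iff, not_lt] <;> linarith
  · rw [htF i (Finset.mem_compl.2 hi)]
    exact hc i (by simpa [F] using hi)

theorem StableArr.mem_cham_of_forall_inner_eq (hst : StableArr w h X)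
    {z : EuclideanSpace ℝ (Fin d)} (hz : z ∈ X) {ρ : Finset (Fin n)}
    (hρ : ∀ i ∈ ρ, ⟪w i, z⟫ = h i) : ρ ∈ cham (hcode w h X) := by
  classical
  set B : Finset (Fin n) := {i | h i < ⟪w i, z⟫}
  have hB : B ⊆ ρᶜ := fun i hi => Finset.mem_compl.2 fun hiρ => by
    simp [B, hρ i hiρ] at hi
  refine mem_cham_of_forall_union_mem hB fun τ hτ => hst.mem_hcode_of_compatible hz fun i hi => ?_
  have hiτ : i ∉ τ := fun hiτ => hi (hρ i (hτ hiτ))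
  simp [B, hiτ]

theorem exists_mem_atom_of_forall_union_mem_hcode (hX : Convex ℝ X) {σ S : Finset (Fin n)}
    (hS : S ⊆ σᶜ) (hC : ∀ τ ⊆ σ, τ ∪ S ∈ hcode w h X) :
    ∃ z ∈ atom w h X S, ∀ i ∈ σ, ⟪w i, z⟫ = h i := by
  classical
  choose p hp using fun τ : Finset σ =>
    hC (τ.map (Function.Embedding.subtype _)) (Finset.map_subtype_subset τ)
  let L : EuclideanSpace ℝ (Fin d) →ₗ[ℝ] σ → ℝ := LinearMap.pi fun i => innerₛₗ ℝ (w i)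
  have hb : (fun i : σ => h i) ∈ convexHull ℝ (L '' Set.range p) := by
    refine mem_convexHull_of_forall_orthant _ fun τ => ⟨L (p τ), Set.mem_image_of_mem _ ⟨τ, rfl⟩,
      fun i => ⟨fun hi => ?_, fun hi => ?_⟩⟩
    · exact (((hp τ).2 i).1 (Finset.mem_union_left _ (Finset.mem_map' _ |>.2 hi))).le
    · refine not_lt.1 fun hlt => ?_
      rcases Finset.mem_union.1 (((hp τ).2 i).2 hlt) with hiτ | hiS
      · exact hi ((Finset.mem_map' _).1 hiτ)
      · exact Finset.mem_compl.1 (hS hiS) i.2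
  rw [← LinearMap.image_convexHull] at hb
  obtain ⟨z, hz, hLz⟩ := hb
  have hzσ : ∀ i ∈ σ, ⟪w i, z⟫ = h i := fun i hi => congr_fun hLz ⟨i, hi⟩
  refine ⟨z, ⟨convexHull_min (Set.range_subset_iff.2 fun τ => (hp τ).1) hX hz, fun i => ?_⟩, hzσ⟩
  have hconv := (innerₛₗ ℝ (w i)).isLinear
  refine ⟨fun hiS => convexHull_min (t := {y | h i < ⟪w i, y⟫}) (Set.range_subset_iff.2 fun τ =>
    ((hp τ).2 i).1 (Finset.mem_union_right _ hiS)) (convex_halfSpace_gt hconv _) hz,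
    fun hlt => by_contra fun hiS => ?_⟩
  by_cases hiσ : i ∈ σ
  · exact hlt.ne' (hzσ i hiσ)
  refine hlt.not_ge (convexHull_min (t := {y | ⟪w i, y⟫ ≤ h i}) (Set.range_subset_iff.2 fun τ =>
    show ⟪w i, p τ⟫ ≤ h i from not_lt.1 fun hτ => ?_) (convex_halfSpace_le hconv _) hz)
  rcases Finset.mem_union.1 (((hp τ).2 i).2 hτ) with hiτ | hiS'
  · exact hiσ (Finset.map_subtype_subset τ hiτ)
  · exact hiS hiS'

theorem exists_mem_inter_hyperplanes_insert (hX : Convex ℝ X) {σ S S' : Finset (Fin n)}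
    {z z' : EuclideanSpace ℝ (Fin d)} (hz : z ∈ atom w h X S) (hz' : z' ∈ atom w h X S')
    (hzσ : ∀ i ∈ σ, ⟪w i, z⟫ = h i) (hz'σ : ∀ i ∈ σ, ⟪w i, z'⟫ = h i) {j : Fin n}
    (hj : j ∈ S) (hj' : j ∉ S') :
    ∃ p ∈ X, ∀ i ∈ insert j σ, ⟪w i, p⟫ = h i := by
  let g : ℝ → EuclideanSpace ℝ (Fin d) := fun t => (1 - t) • z + t • z'
  have hg : ∀ i t, ⟪w i, g t⟫ = (1 - t) * ⟪w i, z⟫ + t * ⟪w i, z'⟫ := fun i t => by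
    simp only [g, inner_add_right, real_inner_smul_right]
  obtain ⟨t, ht, hjt⟩ : ∃ t ∈ Set.Icc (0 : ℝ) 1, ⟪w j, g t⟫ = h j := by
    refine intermediate_value_Icc' zero_le_one (Continuous.continuousOn (by fun_prop))
      ⟨?_, ?_⟩ <;> simp only [hg, sub_zero, sub_self, zero_mul, one_mul, zero_add, add_zero]
    · exact not_lt.1 fun hlt => hj' ((hz'.2 j).2 hlt)
    · exact ((hz.2 j).1 hj).le
  refine ⟨g t, hX hz.1 hz'.1 (by linarith [ht.2]) ht.1 (by ring), ?_⟩
  simp only [Finset.mem_insert, forall_eq_or_imp]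
  exact ⟨hjt, fun i hi => by rw [hg, hzσ i hi, hz'σ i hi]; ring⟩

theorem StableArr.exists_insert_mem_cham_of_ne (hst : StableArr w h X) {σ S S' : Finset (Fin n)}
    (hS : S ⊆ σᶜ) (hS' : S' ⊆ σᶜ) (hC : ∀ τ ⊆ σ, τ ∪ S ∈ hcode w h X)
    (hC' : ∀ τ ⊆ σ, τ ∪ S' ∈ hcode w h X) (hne : S ≠ S') :
    ∃ j ∉ σ, insert j σ ∈ cham (hcode w h X) := by
  obtain ⟨z, hz, hzσ⟩ := exists_mem_atom_of_forall_union_mem_hcode hst.2.1 hS hC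
  obtain ⟨z', hz', hz'σ⟩ := exists_mem_atom_of_forall_union_mem_hcode hst.2.1 hS' hC'
  obtain ⟨j, hj⟩ : ∃ j, (j ∈ S ∧ j ∉ S') ∨ (j ∈ S' ∧ j ∉ S) := by
    by_contra! hall
    exact hne (Finset.ext fun j => ⟨(hall j).1, (hall j).2⟩)
  obtain ⟨p, hpX, hp⟩ : ∃ p ∈ X, ∀ i ∈ insert j σ, ⟪w i, p⟫ = h i := by
    rcases hj with ⟨hjS, hjS'⟩ | ⟨hjS', hjS⟩
    · exact exists_mem_inter_hyperplanes_insert hst.2.1 hz hz' hzσ hz'σ hjS hjS'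
    · exact exists_mem_inter_hyperplanes_insert hst.2.1 hz' hz hz'σ hzσ hjS' hjS
  refine ⟨j, fun hjσ => ?_, hst.mem_cham_of_forall_inner_eq hpX hp⟩
  rcases hj with ⟨hjS, -⟩ | ⟨hjS', -⟩
  · exact Finset.mem_compl.1 (hS hjS) hjσ
  · exact Finset.mem_compl.1 (hS' hjS') hjσ

end Arrangement

/-- Single chamber property: if `C` is a stable hyperplane code, then every maximal
face `σ` of the combinatorial chamber complex `cham(C)` has a unique chamber, i.e.
a unique face `T ∈ Γ(C)` with `supp T = [n] \ σ` and `link_T Γ(C) = Γ(2^σ)`. -/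
theorem unique_chamber_of_stable {n d : ℕ} (w : Fin n → EuclideanSpace ℝ (Fin d))
    (h : Fin n → ℝ) (X : Set (EuclideanSpace ℝ (Fin d)))
    (hst : StableArr w h X) (C : Set (Finset (Fin n))) (hC : C = hcode w h X)
    (σ : Finset (Fin n)) (hσ : σ ∈ cham C)
    (hmax : ∀ σ' ∈ cham C, σ ⊆ σ' → σ' = σ) :
    ∃! T : Finset (Fin n ⊕ Fin n),
      T ∈ polar C ∧ suppF T = σᶜ ∧
        link (polar C) T = polarOn σ {τ | τ ⊆ σ} := by
  subst hC
  obtain ⟨T₀, hT₀, hsupp₀, hlink₀⟩ := hσ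
  refine ⟨T₀, ⟨hT₀, hsupp₀, hlink₀⟩, fun T ⟨hT, hsupp, hlink⟩ => ?_⟩
  obtain ⟨S, hS, rfl, hSC⟩ := exists_eq_polarFaceOn_of_chamber hT hsupp hlink
  obtain ⟨S₀, hS₀, rfl, hS₀C⟩ := exists_eq_polarFaceOn_of_chamber hT₀ hsupp₀ hlink₀
  by_contra hne
  obtain ⟨j, hjσ, hj⟩ :=
    hst.exists_insert_mem_cham_of_ne hS hS₀ hSC hS₀C (by rintro rfl; exact hne rfl)
  exact hjσ (Finset.insert_eq_self.1 (hmax _ hj (Finset.subset_insert j σ)))
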